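/- arXiv:1606.06794 — 2 statements merged into one kernel-verified Lean document; each statement's English description precedes it below -/
import Mathlib

section
/- The function f(l) = log U(l), where U(l) = 1 - c(1/(1+e^{-a(l-b)}) - d) is the sigmoidal utility with a,b > 0, c = (1+e^{ab})/e^{ab}, d = 1/(1+e^{ab}), is concave on [0,∞). -/
/-!
Clearing denominators, `U l = (1 + e^{-ab}) / (1 + e^{a(l-b)})`, so `log U` is a constant minus
the softplus function `x ↦ log (1 + eˣ)` precomposed with the affine map `l ↦ a(l-b)`. Softplus is
convex because its derivative, the logistic function `eˣ / (1 + eˣ)`, is increasing.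
-/

open Real Set

lemma hasDerivAt_log_one_add_exp (x : ℝ) :
    HasDerivAt (fun x => log (1 + exp x)) (exp x / (1 + exp x)) x :=
  ((hasDerivAt_exp x).const_add 1).log (by positivity)

lemma monotone_exp_div_one_add_exp : Monotone fun x => exp x / (1 + exp x) := by
  intro x y hxy
  have hexp : exp x ≤ exp y := exp_le_exp.mpr hxy
  show exp x / (1 + exp x) ≤ exp y / (1 + exp y)
  rw [div_le_div_iff₀ (by positivity) (by positivity)]
  linarith

lemma convexOn_log_one_add_exp : ConvexOn ℝ univ fun x => log (1 + exp x) := by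
  have hderiv : deriv (fun x => log (1 + exp x)) = fun x => exp x / (1 + exp x) :=
    funext fun x => (hasDerivAt_log_one_add_exp x).deriv
  refine Monotone.convexOn_univ_of_deriv
    (fun x => (hasDerivAt_log_one_add_exp x).differentiableAt) ?_
  rw [hderiv]
  exact monotone_exp_div_one_add_exp

lemma convexOn_log_one_add_exp_mul_sub (a b : ℝ) :
    ConvexOn ℝ univ fun l => log (1 + exp (a * (l - b))) := by
  let g : ℝ →ᵃ[ℝ] ℝ := (LinearMap.mul ℝ ℝ a).toAffineMap + AffineMap.const ℝ ℝ (-(a * b))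
  have hg : ∀ l, g l = a * (l - b) := fun l => by
    simp only [g, AffineMap.coe_add, LinearMap.coe_toAffineMap, AffineMap.coe_const, Pi.add_apply,
      LinearMap.mul_apply_apply, Function.const_apply]
    ring
  simpa only [preimage_univ, Function.comp_def, hg] using
    convexOn_log_one_add_exp.comp_affineMap g

lemma one_sub_mul_logistic_sub (t x : ℝ) :
    1 - (1 + exp t) / exp t * (1 / (1 + exp (-x)) - 1 / (1 + exp t)) =
      (1 + exp (-t)) / (1 + exp x) := by
  rw [exp_neg, exp_neg]
  field_simp
  ring

theorem stmt_6_general (a b : ℝ)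
    (c d : ℝ) (hc : c = (1 + Real.exp (a*b)) / Real.exp (a*b))
    (hd : d = 1 / (1 + Real.exp (a*b)))
    (U : ℝ → ℝ) (hU : ∀ l, U l = 1 - c * (1 / (1 + Real.exp (-a*(l-b))) - d)) :
    ConcaveOn ℝ (Set.Ici 0) (fun l => Real.log (U l)) := by
  have hlogU : (fun l => log (U l)) =
      fun l => log (1 + exp (-(a * b))) - log (1 + exp (a * (l - b))) := by
    funext l
    rw [hU, hc, hd, neg_mul, one_sub_mul_logistic_sub, log_div (by positivity) (by positivity)]
  rw [hlogU]
  exact ((concaveOn_const _ convex_univ).sub (convexOn_log_one_add_exp_mul_sub a b)).subset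
    (subset_univ _) (convex_Ici 0)

theorem stmt_6 (a b : ℝ) (ha : 0 < a) (hb : 0 < b)
    (c d : ℝ) (hc : c = (1 + Real.exp (a*b)) / Real.exp (a*b))
    (hd : d = 1 / (1 + Real.exp (a*b)))
    (U : ℝ → ℝ) (hU : ∀ l, U l = 1 - c * (1 / (1 + Real.exp (-a*(l-b))) - d)) :
    ConcaveOn ℝ (Set.Ici 0) (fun l => Real.log (U l)) :=
  stmt_6_general a b c d hc hd U hU
end

section
/- Let f(α) = log U(ℓ(α)) where ℓ(α) = α·ℓ₁ + (1-α)·ℓ₂ is an affine function with ℓ₁, ℓ₂ ≥ 0, and U is the sigmoidal utility with parameters a,b > 0. Then f is concave on [0,1]. -/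
/-!
Writing `σ` for the logistic sigmoid, `U l = σ (a (b - l)) / σ (a b)`, so `f` is, up to an additive
constant, `log ∘ σ` precomposed with an affine map. And `log ∘ σ` is concave on all of `ℝ`: its
derivative `σ' / σ = 1 - σ` is antitone.
-/

open Real

namespace Real

lemma hasDerivAt_log_sigmoid (x : ℝ) :
    HasDerivAt (fun x => log (sigmoid x)) (1 - sigmoid x) x := by
  convert (hasDerivAt_sigmoid x).log (sigmoid_pos x).ne' using 1
  field_simp [(sigmoid_pos x).ne']

lemma concaveOn_log_sigmoid : ConcaveOn ℝ Set.univ (fun x => log (sigmoid x)) := by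
  have hderiv : deriv (fun x => log (sigmoid x)) = fun x => 1 - sigmoid x :=
    funext fun x => (hasDerivAt_log_sigmoid x).deriv
  refine Antitone.concaveOn_univ_of_deriv
    (fun x => (hasDerivAt_log_sigmoid x).differentiableAt) ?_
  rw [hderiv]
  exact fun x y hxy => sub_le_sub_left (sigmoid_monotone hxy) 1

lemma one_sub_mul_sub_eq_sigmoid_neg_div_sigmoid (x y : ℝ) :
    1 - (1 + exp y) / exp y * (1 / (1 + exp (-x)) - 1 / (1 + exp y))
      = sigmoid (-x) / sigmoid y := by
  simp only [sigmoid_def, neg_neg, exp_neg]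
  field_simp
  ring

end Real

theorem stmt_8_general (a b l₁ l₂ : ℝ)
    (c d : ℝ) (hc : c = (1 + Real.exp (a*b)) / Real.exp (a*b))
    (hd : d = 1 / (1 + Real.exp (a*b)))
    (U : ℝ → ℝ) (hU : ∀ l, U l = 1 - c * (1 / (1 + Real.exp (-a*(l-b))) - d))
    (f : ℝ → ℝ) (hf : ∀ α, f α = Real.log (U (α * l₁ + (1-α) * l₂))) :
    ConcaveOn ℝ (Set.Icc 0 1) f := by
  have hU' : ∀ l, U l = sigmoid (a * (b - l)) / sigmoid (a * b) := fun l => by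
    rw [hU, hc, hd, neg_mul, one_sub_mul_sub_eq_sigmoid_neg_div_sigmoid]
    ring_nf
  have hf' : f = fun α => log (sigmoid (AffineMap.lineMap (a * (b - l₂)) (a * (b - l₁)) α))
      + -log (sigmoid (a * b)) := funext fun α => by
    rw [hf, hU', log_div (sigmoid_pos _).ne' (sigmoid_pos _).ne', AffineMap.lineMap_apply_ring]
    ring_nf
  rw [hf']
  exact ((concaveOn_log_sigmoid.comp_affineMap _).add_const _).subset (Set.subset_univ _)
    (convex_Icc 0 1)

theorem stmt_8 (a b l₁ l₂ : ℝ) (ha : 0 < a) (hb : 0 < b) (hl₁ : 0 ≤ l₁) (hl₂ : 0 ≤ l₂)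
    (c d : ℝ) (hc : c = (1 + Real.exp (a*b)) / Real.exp (a*b))
    (hd : d = 1 / (1 + Real.exp (a*b)))
    (U : ℝ → ℝ) (hU : ∀ l, U l = 1 - c * (1 / (1 + Real.exp (-a*(l-b))) - d))
    (f : ℝ → ℝ) (hf : ∀ α, f α = Real.log (U (α * l₁ + (1-α) * l₂))) :
    ConcaveOn ℝ (Set.Icc 0 1) f :=
  stmt_8_general a b l₁ l₂ c d hc hd U hU f hf
end
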